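/- Let V be a finite-dimensional real vector space, D ⊆ V ⊕ V* Lagrangian for the pairing ⟨(u,α),(v,β)⟩ = β(u) + α(v), and K ⊆ V a subspace with 𝒦 = K ⊕ {0}. Then (D ∩ 𝒦^⊥)^⊥ = D + 𝒦, where orthogonal complements are taken with respect to the pairing on V ⊕ V*. -/

import Mathlib

open Module

/-- The canonical symmetric pairing on `V ⊕ V*`:
`⟨(u,α),(v,β)⟩ = β(u) + α(v)`. -/
noncomputable def pairingForm (V : Type*) [AddCommGroup V] [Module ℝ V] :
    LinearMap.BilinForm ℝ (V × Module.Dual ℝ V) :=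
  LinearMap.mk₂ ℝ (fun p q => q.2 p.1 + p.2 q.1)
    (fun p p' q => by
      simp only [Prod.fst_add, Prod.snd_add, map_add, LinearMap.add_apply]; ring)
    (fun c p q => by
      simp only [Prod.smul_fst, Prod.smul_snd, map_smul, LinearMap.smul_apply,
        smul_eq_mul]; ring)
    (fun p q q' => by
      simp only [Prod.fst_add, Prod.snd_add, map_add, LinearMap.add_apply]; ring)
    (fun p c q => by
      simp only [Prod.smul_fst, Prod.smul_snd, map_smul, LinearMap.smul_apply,
        smul_eq_mul]; ring)

namespace LinearMap.BilinForm

theorem orthogonal_sup {R M : Type*} [CommSemiring R] [AddCommMonoid M] [Module R M]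
    (B : LinearMap.BilinForm R M) (N L : Submodule R M) :
    B.orthogonal (N ⊔ L) = B.orthogonal N ⊓ B.orthogonal L := by
  refine le_antisymm (le_inf (B.orthogonal_le le_sup_left) (B.orthogonal_le le_sup_right)) ?_
  rintro m ⟨hmN, hmL⟩ x hx
  obtain ⟨n, hn, l, hl, rfl⟩ := Submodule.mem_sup.mp hx
  rw [map_add, LinearMap.add_apply, hmN n hn, hmL l hl, add_zero]

end LinearMap.BilinForm

section PairingForm

variable (V : Type*) [AddCommGroup V] [Module ℝ V]

@[simp]
theorem pairingForm_apply (p q : V × Dual ℝ V) : pairingForm V p q = q.2 p.1 + p.2 q.1 :=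
  rfl

theorem pairingForm_isSymm : (pairingForm V).IsSymm :=
  ⟨fun p q => by simp only [pairingForm_apply, add_comm]⟩

theorem pairingForm_nondegenerate : (pairingForm V).Nondegenerate := by
  refine ((pairingForm_isSymm V).isRefl.nondegenerate_iff_separatingLeft).mpr fun p hp => ?_
  have hfst : p.1 = 0 := (forall_dual_apply_eq_zero_iff ℝ p.1).mp fun φ => by
    simpa using hp (0, φ)
  have hsnd : p.2 = 0 := LinearMap.ext fun v => by simpa using hp (v, 0)
  exact Prod.ext hfst hsnd

end PairingForm

/-- for a Lagrangian `D ⊆ V ⊕ V*` and `𝒦 = K ⊕ {0}`, one has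
`(D ∩ 𝒦^⊥)^⊥ = D + 𝒦`, where orthogonal complements are taken with respect to
the canonical symmetric pairing on `V ⊕ V*`. -/
theorem orthogonal_of_inter
    (V : Type*) [AddCommGroup V] [Module ℝ V] [FiniteDimensional ℝ V]
    (D : Submodule ℝ (V × Module.Dual ℝ V))
    (hD : D = (pairingForm V).orthogonal D)
    (K : Submodule ℝ V) :
    (pairingForm V).orthogonal
        (D ⊓ (pairingForm V).orthogonal (K.prod (⊥ : Submodule ℝ (Module.Dual ℝ V))))
      = D ⊔ K.prod (⊥ : Submodule ℝ (Module.Dual ℝ V)) := by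
  conv_lhs => rw [hD, ← LinearMap.BilinForm.orthogonal_sup]
  exact LinearMap.BilinForm.orthogonal_orthogonal (pairingForm_nondegenerate V)
    (pairingForm_isSymm V).isRefl _
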